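/- Let Π = ⟨π₁, …, πₙ⟩ be a layered plan over L, i.e. each πᵢ is a finite set of pairwise independent STRIPS actions, and suppose Π is applicable from the state s, i.e. pre(πᵢ) is contained in the state obtained by successively applying π₁, …, πᵢ₋₁ to s, for every i. Let lᵢ be any linearization of πᵢ for each i. Then sequential execution of the concatenated list l₁ ++ l₂ ++ ⋯ ++ lₙ from s yields exactly the state γ(s, Π) obtained by successively applying the layers π₁, …, πₙ to s. -/

import Mathlib

namespace STRIPS

/-- A STRIPS action over a type `L` of logical propositions. -/
structure Action (L : Type*) where
  pre : Set L
  add : Set L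
  del : Set L

/-- Applying an action `a` to a state `s`: `γ(s, a) = (s \ del(a)) ∪ add(a)`. -/
def gamma {L : Type*} (s : Set L) (a : Action L) : Set L :=
  (s \ a.del) ∪ a.add

/-- Two actions are independent iff `del(a) ∩ (pre(b) ∪ add(b)) = ∅`
and `del(b) ∩ (pre(a) ∪ add(a)) = ∅`. -/
def Indep {L : Type*} (a b : Action L) : Prop :=
  a.del ∩ (b.pre ∪ b.add) = ∅ ∧ b.del ∩ (a.pre ∪ a.add) = ∅

/-- `pre(π) = ⋃_{a ∈ π} pre(a)`. -/
def preL {L : Type*} (π : Set (Action L)) : Set L := ⋃ a ∈ π, a.pre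

/-- `add(π) = ⋃_{a ∈ π} add(a)`. -/
def addL {L : Type*} (π : Set (Action L)) : Set L := ⋃ a ∈ π, a.add

/-- `del(π) = ⋃_{a ∈ π} del(a)`. -/
def delL {L : Type*} (π : Set (Action L)) : Set L := ⋃ a ∈ π, a.del

/-- Applying an action layer `π` to a state `s`:
`γ(s, π) = (s \ del(π)) ∪ add(π)`. -/
def gammaL {L : Type*} (s : Set L) (π : Set (Action L)) : Set L :=
  (s \ delL π) ∪ addL π

/-- The actions in `π` are pairwise independent. -/
def PairwiseIndep {L : Type*} (π : Set (Action L)) : Prop :=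
  ∀ a ∈ π, ∀ b ∈ π, a ≠ b → Indep a b

/-- `l` is a linearization of `π`: a list enumerating each action of `π`
exactly once. -/
def Linearization {L : Type*} (π : Set (Action L)) (l : List (Action L)) : Prop :=
  l.Nodup ∧ ∀ a, a ∈ l ↔ a ∈ π

/-- Applying a layered plan `Π = ⟨π₁, …, πₙ⟩` to a state `s`:
`γ(s, Π) = γ(γ(s, π₁), ⟨π₂, …, πₙ⟩)`. -/
def gammaP {L : Type*} (s : Set L) (P : List (Set (Action L))) : Set L :=
  P.foldl gammaL s

/-! Running a list of actions one after another deletes and adds exactly what the whole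
list deletes and adds, provided no action adds a proposition that a later one deletes; within
a layer this is guaranteed by independence. Concatenating the linearizations then chains the
layers. -/

theorem gammaL_insert {L : Type*} {s : Set L} {a : Action L} {π : Set (Action L)}
    (h : Disjoint a.add (delL π)) :
    gammaL s (insert a π) = gammaL (gamma s a) π := by
  have hadd : a.add \ delL π = a.add := h.sdiff_eq_left
  simp only [gammaL, gamma, delL, addL, Set.biUnion_insert] at hadd ⊢
  rw [Set.union_sdiff_distrib, hadd, Set.sdiff_sdiff, Set.union_assoc]

theorem foldl_gamma_eq_gammaL {L : Type*} (s : Set L) {l : List (Action L)}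
    (hl : l.Pairwise fun a b => Disjoint a.add b.del) :
    l.foldl gamma s = gammaL s {a | a ∈ l} := by
  induction l generalizing s with
  | nil => simp [gammaL, delL, addL]
  | cons a t ih =>
    obtain ⟨ha, ht⟩ := List.pairwise_cons.mp hl
    have hsplit : {b | b ∈ a :: t} = insert a {b | b ∈ t} := by ext; simp
    have hdisj : Disjoint a.add (delL {b | b ∈ t}) :=
      Set.disjoint_iUnion₂_right.mpr ha
    rw [List.foldl_cons, ih _ ht, hsplit, gammaL_insert hdisj]

theorem Indep.disjoint_add_del {L : Type*} {a b : Action L} (h : Indep a b) :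
    Disjoint a.add b.del := by
  rw [Set.disjoint_iff_inter_eq_empty, ← Set.subset_empty_iff, ← h.2]
  exact fun x ⟨hxa, hxb⟩ => ⟨hxb, Or.inr hxa⟩

theorem Linearization.foldl_gamma_eq_gammaL {L : Type*} {π : Set (Action L)}
    {l : List (Action L)} (hl : Linearization π l) (hind : PairwiseIndep π) (s : Set L) :
    l.foldl gamma s = gammaL s π := by
  obtain ⟨hnodup, hmem⟩ := hl
  have hπ : {a | a ∈ l} = π := Set.ext hmem
  rw [STRIPS.foldl_gamma_eq_gammaL s, hπ]
  exact hnodup.pairwise_of_forall_ne fun a ha b hb hab =>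
    (hind a ((hmem a).mp ha) b ((hmem b).mp hb) hab).disjoint_add_del

theorem foldl_flatten_gamma_eq_gammaP {L : Type*} (s : Set L) {ls : List (List (Action L))}
    {P : List (Set (Action L))}
    (h : List.Forall₂ (fun l π => ∀ t, l.foldl gamma t = gammaL t π) ls P) :
    ls.flatten.foldl gamma s = gammaP s P := by
  induction h generalizing s with
  | nil => rfl
  | cons hl _ ih => rw [List.flatten_cons, List.foldl_append, hl, ih]; rfl

/-- Let `Π = ⟨π₁, …, πₙ⟩` be a layered plan (each `πᵢ` a finite set of
pairwise independent actions) applicable from the state `s` (each `pre(πᵢ)`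
holds in the state obtained by applying `π₁, …, πᵢ₋₁` to `s`), and let `lᵢ`
be a linearization of `πᵢ` for each `i`. Then sequential execution of
`l₁ ++ l₂ ++ ⋯ ++ lₙ` from `s` yields exactly `γ(s, Π)`. -/
theorem join_linearizations_foldl_eq_gammaP {L : Type*} (s : Set L)
    (P : List (Set (Action L)))
    (hind : ∀ π ∈ P, PairwiseIndep π)
    (ls : List (List (Action L))) (hlen : ls.length = P.length)
    (hlin : ∀ (i : ℕ) (h : i < P.length),
      Linearization (P.get ⟨i, h⟩) (ls.get ⟨i, by omega⟩)) :
    ls.flatten.foldl gamma s = gammaP s P := by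
  refine foldl_flatten_gamma_eq_gammaP s (List.forall₂_iff_get.mpr ⟨hlen, fun i _ hi => ?_⟩)
  exact (hlin i hi).foldl_gamma_eq_gammaL (hind _ (List.get_mem P _))

end STRIPS
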